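/- Let γ ≥ 1, let ν be a positive measure supported on [0,1], define B_z(ζ) = (1−conj(z)ζ)^{−γ}·∫₀¹ dν(r)/(1−r·conj(z)ζ) for z, ζ in the unit disc 𝔻, and let c > 1. Then |B_{z₀}(ζ) − B_z(ζ)| ≤ C·(|z−z₀|/|1−conj(ζ)z|)·|B_z(ζ)| for all z, z₀, ζ ∈ 𝔻 with |1−conj(ζ)z| ≥ c·|z−z₀|, where C = C(c,γ) = √2·(2+γ)·c^{γ+1}(3c+1)/(c−1)^{γ+2}. -/

import Mathlib

open MeasureTheory Complex Set Filter
open scoped ENNReal NNReal Real Classical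

noncomputable section

/-- The open unit disc in `ℂ`. -/
def unitDisc : Set ℂ := Metric.ball 0 1

/-- The moment `ω_n = ∫₀¹ rⁿ dω(r)`. -/
def momNat (ω : Measure ℝ) (n : ℕ) : ℝ := ∫ r, r ^ n ∂ω

/-- The Bergman reproducing kernel `B^ω_z(ζ) = Σ (ζ conj z)ⁿ/(2 ω_{2n+1})`. -/
def bergmanKernel (ω : Measure ℝ) (z ζ : ℂ) : ℂ :=
  ∑' n : ℕ, (ζ * (starRingEnd ℂ) z) ^ n / (2 * (momNat ω (2 * n + 1) : ℂ))

/-- The measure `ω⊗m` on the unit disc: `d(ω⊗m)(re^{iθ}) = r dω(r) dθ`. -/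
def polarMeasure (ω : Measure ℝ) : Measure ℂ :=
  Measure.map (fun p : ℝ × ℝ => (p.1 : ℂ) * Complex.exp ((p.2 : ℂ) * Complex.I))
    ((ω.withDensity fun r => ENNReal.ofReal r).prod
      (volume.restrict (Set.Ico (0 : ℝ) (2 * Real.pi))))

/-- The class `D̂`: `ω̂(r) ≤ C ω̂((1+r)/2)`. -/
def DhatClass (ω : Measure ℝ) : Prop :=
  ∃ C : ℝ≥0, ∀ r : ℝ, 0 ≤ r → r < 1 →
    ω (Set.Ico r 1) ≤ (C : ℝ≥0∞) * ω (Set.Ico ((1 + r) / 2) 1)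

/-- The class `R` of regular measures on `[0,1)`. -/
def RClass (ω : Measure ℝ) : Prop :=
  ∃ C g b : ℝ, 0 < C ∧ 0 < g ∧ g ≤ b ∧
    ∀ r t : ℝ, 0 ≤ r → r ≤ t → t < 1 →
      ENNReal.ofReal (C⁻¹ * ((1 - r) / (1 - t)) ^ g) * ω (Set.Ico t 1) ≤ ω (Set.Ico r 1) ∧
      ω (Set.Ico r 1) ≤ ENNReal.ofReal (C * ((1 - r) / (1 - t)) ^ b) * ω (Set.Ico t 1)

/-- `ω([a,b]) ≍ ω([a,(a+b)/2]) ≍ ω([(a+b)/2,b])`. -/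
def Halving (ω : Measure ℝ) : Prop :=
  ∃ C : ℝ≥0, 0 < C ∧ ∀ a b : ℝ, 0 ≤ a → a ≤ b → b ≤ 1 →
    (ω (Set.Icc a b) ≤ (C : ℝ≥0∞) * ω (Set.Icc a ((a + b) / 2)) ∧
      ω (Set.Icc a ((a + b) / 2)) ≤ (C : ℝ≥0∞) * ω (Set.Icc a b)) ∧
    (ω (Set.Icc a b) ≤ (C : ℝ≥0∞) * ω (Set.Icc ((a + b) / 2) b) ∧
      ω (Set.Icc ((a + b) / 2) b) ≤ (C : ℝ≥0∞) * ω (Set.Icc a b))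

/-- The Carleson square over the arc of normalized length `h` starting at angle `θ₀`. -/
def carlesonSquare (θ₀ h : ℝ) : Set ℂ :=
  {z : ℂ | 1 - h ≤ ‖z‖ ∧ ‖z‖ < 1 ∧
    ∃ θ ∈ Set.Ico θ₀ (θ₀ + 2 * Real.pi * h),
      z = (‖z‖ : ℂ) * Complex.exp ((θ : ℂ) * Complex.I)}

/-- The top half of the Carleson square. -/
def carlesonTop (θ₀ h : ℝ) : Set ℂ :=
  {z : ℂ | 1 - h ≤ ‖z‖ ∧ ‖z‖ < 1 - h / 2 ∧
    ∃ θ ∈ Set.Ico θ₀ (θ₀ + 2 * Real.pi * h),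
      z = (‖z‖ : ℂ) * Complex.exp ((θ : ℂ) * Complex.I)}

/-- The Carleson square `S(I^β_{j,m})` over the dyadic arc `I^β_{j,m}`, of
normalized length `2/2^j`. -/
def dyadicSq (β : ℝ) (j m : ℕ) : Set ℂ :=
  carlesonSquare (4 * Real.pi * ((m : ℝ) + β) / 2 ^ j) (2 / 2 ^ j)

/-- The top half `T(I^β_{j,m})`. -/
def dyadicTop (β : ℝ) (j m : ℕ) : Set ℂ :=
  carlesonTop (4 * Real.pi * ((m : ℝ) + β) / 2 ^ j) (2 / 2 ^ j)

/-- The Bergman projection `P_ω`. -/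
def bergmanProj (ω : Measure ℝ) (f : ℂ → ℂ) (z : ℂ) : ℂ :=
  ∫ ζ, f ζ * (starRingEnd ℂ) (bergmanKernel ω z ζ) ∂(polarMeasure ω)

/-- The maximal Bergman projection `P⁺_ω`. -/
def bergmanProjPlus (ω : Measure ℝ) (f : ℂ → ℂ) (z : ℂ) : ℂ :=
  ∫ ζ, f ζ * (‖bergmanKernel ω z ζ‖ : ℂ) ∂(polarMeasure ω)

/-- `B^ω_z` admits the representation (*) with exponent `γ ≥ 1` and a positive
measure `ν` supported on `[0,1]`. -/
def KernelRep (ω : Measure ℝ) (γ : ℝ) (ν : Measure ℝ) : Prop :=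
  1 ≤ γ ∧ ν (Set.Icc (0 : ℝ) 1)ᶜ = 0 ∧
  ∀ z ∈ unitDisc, ∀ ζ ∈ unitDisc,
    bergmanKernel ω z ζ =
      (1 - (starRingEnd ℂ) z * ζ) ^ (-(γ : ℂ)) *
        ∫ r : ℝ, (1 - (r : ℂ) * ((starRingEnd ℂ) z * ζ))⁻¹ ∂ν

/-- The Bekollé–Bonami characteristic `B_{p,μ}(v)`, a supremum over all Carleson squares. -/
def BpConst (p : ℝ) (μ : Measure ℂ) (v : ℂ → ℝ) : ℝ≥0∞ :=
  ⨆ (θ₀ : ℝ) (h : ℝ) (_ : 0 < h) (_ : h ≤ 1),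
    ((∫⁻ z in carlesonSquare θ₀ h, ENNReal.ofReal (v z) ∂μ) / μ (carlesonSquare θ₀ h)) *
      ((∫⁻ z in carlesonSquare θ₀ h, ENNReal.ofReal (v z ^ (-(1 / (p - 1)))) ∂μ) /
          μ (carlesonSquare θ₀ h)) ^ (p - 1)

/-- An `ω`-weight: positive on the disc and `(ω⊗m)`-integrable. -/
def IsWeight (μ : Measure ℂ) (v : ℂ → ℝ) : Prop :=
  (∀ z ∈ unitDisc, 0 < v z) ∧ ∫⁻ z, ENNReal.ofReal (v z) ∂μ < ⊤

/-- The weighted maximal function `M_ω`. -/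
def maxFn (μ : Measure ℂ) (v : ℂ → ℝ) (z : ℂ) : ℝ≥0∞ :=
  ⨆ (a : ℂ) (r : ℝ) (_ : z ∈ Metric.ball a r),
    (∫⁻ ζ in Metric.ball a r ∩ unitDisc, ENNReal.ofReal (v ζ) ∂μ) /
      μ (Metric.ball a r ∩ unitDisc)

/-- The class `B_{1,ω}`: `M_ω(v) ≤ C v` almost everywhere. -/
def B1Class (μ : Measure ℂ) (v : ℂ → ℝ) : Prop :=
  ∃ C : ℝ≥0, ∀ᵐ z ∂μ, maxFn μ v z ≤ (C : ℝ≥0∞) * ENNReal.ofReal (v z)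

/-- The weighted `L^p` norm `(∫ |f|^p v dμ)^{1/p}`. -/
def lpNorm (μ : Measure ℂ) (p : ℝ) (v : ℂ → ℝ) (f : ℂ → ℂ) : ℝ≥0∞ :=
  (∫⁻ z, (‖f z‖₊ : ℝ≥0∞) ^ p * ENNReal.ofReal (v z) ∂μ) ^ (1 / p)

/-- `Ψ` is essentially decreasing on `(0,2)`. -/
def EssDecreasingOn (Ψ : ℝ → ℝ) : Prop :=
  ∃ C : ℝ, ∀ s t : ℝ, 0 < s → s ≤ t → t < 2 → Ψ t ≤ C * Ψ s

/-- The kernel `K_Ψ(z,ζ) = Ψ(|1 - conj ζ z|)/|1 - conj ζ z|`. -/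
def Kpsi (Ψ : ℝ → ℝ) (z ζ : ℂ) : ℝ :=
  Ψ (‖1 - (starRingEnd ℂ) ζ * z‖) / ‖1 - (starRingEnd ℂ) ζ * z‖

/-- The dyadic kernel `K^β_Ψ(z,ζ) = Σ_{I ∈ D^β} 1_{S(I)}(z) 1_{S(I)}(ζ) Ψ(|I|)/|I|`. -/
def KpsiDyadic (Ψ : ℝ → ℝ) (β : ℝ) (z ζ : ℂ) : ℝ :=
  ∑' jm : ℕ × ℕ,
    if jm.2 < 2 ^ jm.1 ∧ z ∈ dyadicSq β jm.1 jm.2 ∧ ζ ∈ dyadicSq β jm.1 jm.2 then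
      Ψ (2 / 2 ^ jm.1) / (2 / 2 ^ jm.1)
    else 0

/-- The dyadic weighted maximal function `M_{ν,D^β}`. -/
def dyadicMax (ν : Measure ℂ) (β : ℝ) (f : ℂ → ℂ) (z : ℂ) : ℝ≥0∞ :=
  ⨆ (jm : ℕ × ℕ) (_ : jm.2 < 2 ^ jm.1) (_ : z ∈ dyadicSq β jm.1 jm.2),
    (∫⁻ ζ in dyadicSq β jm.1 jm.2, (‖f ζ‖₊ : ℝ≥0∞) ∂ν) / ν (dyadicSq β jm.1 jm.2)

/-- The dyadic operator `P^β_{Ψ,μ}(f) = Σ_{I ∈ D^β} ⟨f, 1_{S(I)} Ψ(|I|)/|I|⟩_{L²_μ} 1_{S(I)}`. -/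
def dyadicOpPsi (μ : Measure ℂ) (ψ : ℝ → ℝ) (β : ℝ) (f : ℂ → ℂ) (z : ℂ) : ℂ :=
  ∑' jm : ℕ × ℕ,
    if jm.2 < 2 ^ jm.1 ∧ z ∈ dyadicSq β jm.1 jm.2 then
      ((ψ (2 / 2 ^ jm.1) / (2 / 2 ^ jm.1) : ℝ) : ℂ) * ∫ ζ in dyadicSq β jm.1 jm.2, f ζ ∂μ
    else 0

/-- The maximal operator `P⁺_{Ψ,μ}(f)(z) = ∫ |Ψ(1-conj ζ z)/(1-conj ζ z)| f(ζ) dμ(ζ)`. -/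
def PplusPsi (μ : Measure ℂ) (Ψ : ℂ → ℂ) (f : ℂ → ℂ) (z : ℂ) : ℂ :=
  ∫ ζ, ((‖Ψ (1 - (starRingEnd ℂ) ζ * z)‖ /
      ‖1 - (starRingEnd ℂ) ζ * z‖ : ℝ) : ℂ) * f ζ ∂μ

/-- Euclidean distance between two sets, as an `ℝ≥0∞`-valued infimum. -/
def setEDist (A B : Set ℂ) : ℝ≥0∞ := ⨅ a ∈ A, ⨅ b ∈ B, edist a b

/-- The polar rectangle `{re^{iθ} : r ∈ [r₁,r₂), θ ∈ [θ₁,θ₂)}`. -/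
def polarRect (r₁ r₂ θ₁ θ₂ : ℝ) : Set ℂ :=
  {z : ℂ | ∃ r θ : ℝ, r ∈ Set.Ico r₁ r₂ ∧ θ ∈ Set.Ico θ₁ θ₂ ∧
    z = (r : ℂ) * Complex.exp ((θ : ℂ) * Complex.I)}

/-- The generation-`k` dyadic polar subrectangle, with indices `i, l < 2^k`, of the
Carleson square over the half-circle starting at angle `θ₀`. -/
def dyadicPolarRect (θ₀ : ℝ) (k i l : ℕ) : Set ℂ :=
  polarRect (1 / 2 + (i : ℝ) / 2 ^ (k + 1)) (1 / 2 + ((i : ℝ) + 1) / 2 ^ (k + 1))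
    (θ₀ + (l : ℝ) * Real.pi / 2 ^ k) (θ₀ + ((l : ℝ) + 1) * Real.pi / 2 ^ k)

/-- The dyadic positive operator `T(f) = Σ_{I ∈ D^β} τ_{S(I)} (E^μ_{S(I)} f) 1_{S(I)}`. -/
def dyadicPosOp (μ : Measure ℂ) (β : ℝ) (τ : ℕ × ℕ → ℝ) (f : ℂ → ℂ) (z : ℂ) : ℂ :=
  ∑' jm : ℕ × ℕ,
    if jm.2 < 2 ^ jm.1 ∧ z ∈ dyadicSq β jm.1 jm.2 then
      ((τ jm / (μ (dyadicSq β jm.1 jm.2)).toReal : ℝ) : ℂ) *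
        ∫ ζ in dyadicSq β jm.1 jm.2, f ζ ∂μ
    else 0

/-!
With `w = conj z * ζ` the kernel is `(1 - w) ^ (-γ) * T w`, where `T w = ∫ dν(r) / (1 - r w)`.
For `r ∈ [0, 1]` the points `1 - r w = (1 - r) + r (1 - w)` lie in a sector of opening at most
`π / 2`, so the integrand of `T w` never cancels by more than a factor `√2`:
`∫ |1 - r w|⁻¹ dν ≤ √2 |T w|`. Together with `|1 - w| ≤ 2 |1 - r w|` this bounds `T w₀ - T w` and
`T w₀` by `|T w|`, while the factor `(1 - w) ^ (-γ)` is handled by the mean value theorem on the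
disc of radius `|w₀ - w| < |1 - w|` about `1 - w`, which stays off the branch cut.
-/

open ComplexConjugate

lemma norm_one_sub_le_two_mul_norm_one_sub_ofReal_mul {w : ℂ} (hw : ‖w‖ ≤ 1) {r : ℝ}
    (hr : r ∈ Icc (0 : ℝ) 1) : ‖1 - w‖ ≤ 2 * ‖1 - r * w‖ := by
  have hrw : ‖((1 - r : ℝ) : ℂ) * w‖ ≤ 1 - r := by
    rw [norm_mul, Complex.norm_real, Real.norm_of_nonneg (by linarith [hr.2])]
    nlinarith [hr.2]
  have hlow : 1 - r ≤ ‖1 - r * w‖ := by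
    have := norm_sub_norm_le (1 : ℂ) (r * w)
    rw [norm_one, norm_mul, Complex.norm_real, Real.norm_of_nonneg hr.1] at this
    nlinarith [hr.1]
  calc ‖1 - w‖ = ‖(1 - r * w) - ((1 - r : ℝ) : ℂ) * w‖ := by push_cast; congr 1; ring
    _ ≤ ‖1 - r * w‖ + ‖((1 - r : ℝ) : ℂ) * w‖ := norm_sub_le _ _
    _ ≤ 2 * ‖1 - r * w‖ := by linarith

lemma norm_inv_one_sub_ofReal_mul_le {w : ℂ} (hw : ‖w‖ ≤ 1) (hw1 : w ≠ 1) {r : ℝ}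
    (hr : r ∈ Icc (0 : ℝ) 1) : ‖(1 - r * w)⁻¹‖ ≤ 2 / ‖1 - w‖ := by
  have hpos : 0 < ‖1 - w‖ := norm_pos_iff.2 (sub_ne_zero.2 hw1.symm)
  have h := norm_one_sub_le_two_mul_norm_one_sub_ofReal_mul hw hr
  rw [norm_inv, inv_le_comm₀ (by linarith) (by positivity), inv_div, div_le_iff₀ two_pos]
  linarith

lemma one_sub_ofReal_mul_ne_zero {w : ℂ} (hw : ‖w‖ ≤ 1) (hw1 : w ≠ 1) {r : ℝ}
    (hr : r ∈ Icc (0 : ℝ) 1) : 1 - (r : ℂ) * w ≠ 0 := fun h ↦ by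
  have := norm_one_sub_le_two_mul_norm_one_sub_ofReal_mul hw hr
  rw [h, norm_zero, mul_zero, norm_le_zero_iff, sub_eq_zero] at this
  exact hw1 this.symm

/-- The points `x + y a` lie in the sector spanned by `1` and `a`, of opening at most `π / 2`
when `Re a ≥ 0`, and `‖a‖ + a` points along its bisector. -/
lemma norm_mul_norm_inv_le_sqrt_two_mul_re {a : ℂ} (ha : 0 ≤ a.re) {x y : ℝ} (hx : 0 ≤ x)
    (hy : 0 ≤ y) :
    ‖(‖a‖ : ℂ) + a‖ * ‖((x : ℂ) + y * a)⁻¹‖ ≤ √2 * (((‖a‖ : ℂ) + a) * ((x : ℂ) + y * a)⁻¹).re := by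
  set s : ℂ := x + y * a
  rcases eq_or_ne s 0 with hs | hs
  · simp [hs]
  have hsq : a.re ^ 2 + a.im ^ 2 = ‖a‖ ^ 2 := by rw [Complex.sq_norm, Complex.normSq_apply]; ring
  have hre : (((‖a‖ : ℂ) + a) * s⁻¹).re = (‖a‖ + a.re) * (x + y * ‖a‖) / ‖s‖ ^ 2 := by
    rw [Complex.inv_def, ← mul_assoc, Complex.re_mul_ofReal, ← Complex.sq_norm, div_eq_mul_inv]
    congr 1
    simp only [s, Complex.mul_re, Complex.conj_re, Complex.conj_im, Complex.add_re, Complex.add_im,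
      Complex.ofReal_re, Complex.ofReal_im, Complex.mul_im]
    linear_combination y * hsq
  have hs_le : ‖s‖ ≤ x + y * ‖a‖ := by
    refine (norm_add_le _ _).trans ?_
    rw [norm_mul, Complex.norm_real, Complex.norm_real, Real.norm_of_nonneg hx,
      Real.norm_of_nonneg hy]
  have hb : ‖(‖a‖ : ℂ) + a‖ ≤ √2 * (‖a‖ + a.re) := by
    have hb2 : ‖(‖a‖ : ℂ) + a‖ ^ 2 = 2 * ‖a‖ * (‖a‖ + a.re) := by
      rw [Complex.sq_norm, Complex.normSq_apply]
      simp only [Complex.add_re, Complex.add_im, Complex.ofReal_re, Complex.ofReal_im]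
      linear_combination hsq
    refine (pow_le_pow_iff_left₀ (norm_nonneg _) (by positivity) two_ne_zero).1 ?_
    rw [hb2, mul_pow, Real.sq_sqrt zero_le_two]
    nlinarith [Complex.re_le_norm a]
  rw [hre, norm_inv]
  calc ‖(‖a‖ : ℂ) + a‖ * ‖s‖⁻¹ ≤ √2 * (‖a‖ + a.re) * ‖s‖⁻¹ := by gcongr
    _ = √2 * ((‖a‖ + a.re) * ‖s‖ / ‖s‖ ^ 2) := by field_simp
    _ ≤ √2 * ((‖a‖ + a.re) * (x + y * ‖a‖) / ‖s‖ ^ 2) := by gcongr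

lemma mul_integral_norm_le_norm_mul_norm_integral {α : Type*} [MeasurableSpace α] {μ : Measure α}
    {f : α → ℂ} (hf : Integrable f μ) (u : ℂ) {κ : ℝ}
    (h : ∀ᵐ x ∂μ, κ * ‖f x‖ ≤ (u * f x).re) :
    κ * ∫ x, ‖f x‖ ∂μ ≤ ‖u‖ * ‖∫ x, f x ∂μ‖ :=
  calc κ * ∫ x, ‖f x‖ ∂μ = ∫ x, κ * ‖f x‖ ∂μ := (integral_const_mul κ _).symm
    _ ≤ ∫ x, (u * f x).re ∂μ := integral_mono_ae (hf.norm.const_mul κ) (hf.const_mul u).re h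
    _ = (u * ∫ x, f x ∂μ).re := by rw [← integral_const_mul]; exact integral_re (hf.const_mul u)
    _ ≤ ‖u‖ * ‖∫ x, f x ∂μ‖ := (Complex.re_le_norm _).trans (norm_mul _ _).le

lemma closedBall_subset_slitPlane {a : ℂ} (ha : 0 ≤ a.re) {δ : ℝ} (hδ : δ < ‖a‖) :
    Metric.closedBall a δ ⊆ Complex.slitPlane := by
  intro s hs
  rw [Complex.mem_slitPlane_iff]
  by_contra! h
  have hsa : ‖a‖ ^ 2 ≤ ‖s - a‖ ^ 2 := by
    simp only [Complex.sq_norm, Complex.normSq_apply, Complex.sub_re, Complex.sub_im, h.2]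
    nlinarith
  have : ‖s - a‖ ≤ δ := by rwa [← dist_eq_norm]
  nlinarith [norm_nonneg (s - a), norm_nonneg a]

lemma norm_cpow_neg_sub_cpow_neg_le {a b : ℂ} {γ δ : ℝ} (hγ : 0 ≤ γ) (ha : 0 ≤ a.re)
    (hb : ‖b - a‖ ≤ δ) (hδ : δ < ‖a‖) :
    ‖b ^ (-γ : ℂ) - a ^ (-γ : ℂ)‖ ≤ γ * (‖a‖ - δ) ^ (-γ - 1) * δ := by
  have hball := closedBall_subset_slitPlane ha hδ
  have hderiv : ∀ s ∈ Metric.closedBall a δ, HasDerivWithinAt (fun s : ℂ ↦ s ^ (-γ : ℂ))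
      (-γ * s ^ (-γ - 1 : ℂ)) (Metric.closedBall a δ) s := fun s hs ↦
    (Complex.hasStrictDerivAt_cpow_const (hball hs)).hasDerivAt.hasDerivWithinAt
  have hbound : ∀ s ∈ Metric.closedBall a δ,
      ‖-γ * s ^ (-γ - 1 : ℂ)‖ ≤ γ * (‖a‖ - δ) ^ (-γ - 1) := by
    intro s hs
    have hs_norm : ‖a‖ - δ ≤ ‖s‖ := by
      have := norm_sub_norm_le a (a - s)
      rw [sub_sub_cancel, norm_sub_rev, ← dist_eq_norm] at this
      linarith [Metric.mem_closedBall.1 hs]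
    rw [norm_mul, norm_neg, Complex.norm_real, Real.norm_of_nonneg hγ,
      show (-γ - 1 : ℂ) = ((-γ - 1 : ℝ) : ℂ) by push_cast; rfl, Complex.norm_cpow_real]
    exact mul_le_mul_of_nonneg_left
      (Real.rpow_le_rpow_of_nonpos (sub_pos.2 hδ) hs_norm (by linarith)) hγ
  have hbmem : b ∈ Metric.closedBall a δ := by rwa [Metric.mem_closedBall, dist_eq_norm]
  calc ‖b ^ (-γ : ℂ) - a ^ (-γ : ℂ)‖ ≤ γ * (‖a‖ - δ) ^ (-γ - 1) * ‖b - a‖ :=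
        (convex_closedBall a δ).norm_image_sub_le_of_norm_hasDerivWithin_le hderiv hbound
          (Metric.mem_closedBall_self ((norm_nonneg _).trans hb)) hbmem
    _ ≤ γ * (‖a‖ - δ) ^ (-γ - 1) * δ := by gcongr

def cauchyTransform (ν : Measure ℝ) (w : ℂ) : ℂ := ∫ r, (1 - (r : ℂ) * w)⁻¹ ∂ν

section
variable {ν : Measure ℝ} [IsFiniteMeasure ν] {w w₀ : ℂ}

lemma integrable_inv_one_sub_ofReal_mul (hν : ∀ᵐ r ∂ν, r ∈ Icc (0 : ℝ) 1) (hw : ‖w‖ ≤ 1)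
    (hw1 : w ≠ 1) : Integrable (fun r : ℝ ↦ (1 - (r : ℂ) * w)⁻¹) ν :=
  (integrable_const (2 / ‖1 - w‖)).mono'
    (by fun_prop : Measurable fun r : ℝ ↦ (1 - (r : ℂ) * w)⁻¹).aestronglyMeasurable
    (hν.mono fun _ hr ↦ norm_inv_one_sub_ofReal_mul_le hw hw1 hr)

lemma integral_norm_inv_le_sqrt_two_mul_norm_cauchyTransform (hν : ∀ᵐ r ∂ν, r ∈ Icc (0 : ℝ) 1)
    (hw : ‖w‖ < 1) : ∫ r, ‖(1 - (r : ℂ) * w)⁻¹‖ ∂ν ≤ √2 * ‖cauchyTransform ν w‖ := by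
  set a := 1 - w
  have ha : 0 < a.re := by
    simp only [a, Complex.sub_re, Complex.one_re]
    linarith [Complex.re_le_norm w]
  set b : ℂ := ‖a‖ + a
  have hb : 0 < ‖b‖ := norm_pos_iff.2 fun h ↦ by
    have := congrArg Complex.re h
    simp only [b, Complex.add_re, Complex.ofReal_re, Complex.zero_re] at this
    linarith [norm_nonneg a]
  have hw1 : w ≠ 1 := fun h ↦ by simp [h] at hw
  have hsector : ∀ᵐ (r : ℝ) ∂ν,
      ‖b‖ / √2 * ‖(1 - (r : ℂ) * w)⁻¹‖ ≤ (b * (1 - (r : ℂ) * w)⁻¹).re := by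
    filter_upwards [hν] with r hr
    have key := norm_mul_norm_inv_le_sqrt_two_mul_re ha.le (sub_nonneg.2 hr.2) hr.1
    rw [show ((1 - r : ℝ) : ℂ) + r * a = 1 - r * w by push_cast [a]; ring] at key
    rw [div_mul_eq_mul_div, div_le_iff₀ (by positivity)]
    linarith
  have := mul_integral_norm_le_norm_mul_norm_integral
    (integrable_inv_one_sub_ofReal_mul hν hw.le hw1) b hsector
  rw [cauchyTransform]
  rw [div_mul_eq_mul_div, div_le_iff₀ (by positivity)] at this
  nlinarith

lemma norm_cauchyTransform_sub_le (hν : ∀ᵐ r ∂ν, r ∈ Icc (0 : ℝ) 1) (hw : ‖w‖ ≤ 1) (hw1 : w ≠ 1)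
    (hw₀ : ‖w₀‖ ≤ 1) (hw₀1 : w₀ ≠ 1) :
    ‖cauchyTransform ν w₀ - cauchyTransform ν w‖ ≤
      2 * ‖w₀ - w‖ / ‖1 - w₀‖ * ∫ r, ‖(1 - (r : ℂ) * w)⁻¹‖ ∂ν := by
  have hint := integrable_inv_one_sub_ofReal_mul hν hw hw1
  have hint₀ := integrable_inv_one_sub_ofReal_mul hν hw₀ hw₀1
  rw [cauchyTransform, cauchyTransform, ← integral_sub hint₀ hint, ← integral_const_mul]
  refine (norm_integral_le_integral_norm _).trans
    (integral_mono_ae (hint₀.sub hint).norm (hint.norm.const_mul _) ?_)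
  filter_upwards [hν] with r hr
  rw [inv_sub_inv' (one_sub_ofReal_mul_ne_zero hw₀ hw₀1 hr) (one_sub_ofReal_mul_ne_zero hw hw1 hr),
    show 1 - (r : ℂ) * w - (1 - r * w₀) = r * (w₀ - w) by ring, norm_mul, norm_mul, norm_mul,
    Complex.norm_real, Real.norm_of_nonneg hr.1]
  have hr₀ := norm_inv_one_sub_ofReal_mul_le hw₀ hw₀1 hr
  calc ‖(1 - (r : ℂ) * w₀)⁻¹‖ * (r * ‖w₀ - w‖) * ‖(1 - (r : ℂ) * w)⁻¹‖
      ≤ 2 / ‖1 - w₀‖ * (1 * ‖w₀ - w‖) * ‖(1 - (r : ℂ) * w)⁻¹‖ := by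
        gcongr
        exacts [mul_nonneg hr.1 (norm_nonneg _), hr.2]
    _ = 2 * ‖w₀ - w‖ / ‖1 - w₀‖ * ‖(1 - (r : ℂ) * w)⁻¹‖ := by ring

end

lemma norm_one_sub_cpow_neg_sub_le {w w₀ : ℂ} {γ c δ : ℝ} (hγ : 0 ≤ γ) (hc : 1 < c)
    (hw : ‖w‖ < 1) (hδ : ‖w₀ - w‖ ≤ δ) (hcδ : c * δ ≤ ‖1 - w‖) :
    ‖(1 - w₀) ^ (-γ : ℂ) - (1 - w) ^ (-γ : ℂ)‖ ≤
      γ * (c / (c - 1)) ^ (γ + 1) * (δ / ‖1 - w‖) * ‖1 - w‖ ^ (-γ) := by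
  set A := ‖1 - w‖
  have hA : 0 < A := by linarith [norm_sub_norm_le (1 : ℂ) w, norm_one (α := ℂ)]
  have hδ0 : 0 ≤ δ := (norm_nonneg _).trans hδ
  have hAδ : A * (c - 1) / c ≤ A - δ := by
    rw [div_le_iff₀ (by linarith)]; linarith
  have hre : 0 ≤ (1 - w).re := by
    simp only [Complex.sub_re, Complex.one_re]; linarith [Complex.re_le_norm w]
  have hmvt := norm_cpow_neg_sub_cpow_neg_le hγ hre
    (by rwa [sub_sub_sub_cancel_left, norm_sub_rev]) (by nlinarith : δ < A)
  have hpow : (A * (c - 1) / c) ^ (-γ - 1) = (c / (c - 1)) ^ (γ + 1) * (A ^ (-γ) / A) := by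
    rw [show A * (c - 1) / c = A / (c / (c - 1)) by field_simp,
      Real.div_rpow hA.le (by positivity), Real.rpow_sub hA, Real.rpow_one,
      show -γ - 1 = -(γ + 1) by ring,
      Real.rpow_neg (by positivity : (0 : ℝ) ≤ c / (c - 1)) (γ + 1)]
    rw [div_inv_eq_mul, mul_comm]
  calc _ ≤ γ * (A - δ) ^ (-γ - 1) * δ := hmvt
    _ ≤ γ * (A * (c - 1) / c) ^ (-γ - 1) * δ := by
      gcongr γ * ?_ * δ
      exact Real.rpow_le_rpow_of_nonpos (by positivity) hAδ (by linarith)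
    _ = _ := by rw [hpow]; ring

def reprKernel (ν : Measure ℝ) (γ : ℝ) (w : ℂ) : ℂ := (1 - w) ^ (-(γ : ℂ)) * cauchyTransform ν w

lemma norm_reprKernel_sub_le {ν : Measure ℝ} [IsFiniteMeasure ν]
    (hν : ∀ᵐ r ∂ν, r ∈ Icc (0 : ℝ) 1) {γ c δ : ℝ} (hγ : 0 ≤ γ) (hc : 1 < c) {w w₀ : ℂ}
    (hw : ‖w‖ < 1) (hw₀ : ‖w₀‖ ≤ 1) (hδ : ‖w₀ - w‖ ≤ δ) (hcδ : c * δ ≤ ‖1 - w‖) :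
    ‖reprKernel ν γ w₀ - reprKernel ν γ w‖ ≤
      √2 * (γ * (c / (c - 1)) ^ (γ + 1) * ((c + 1) / (c - 1)) + 2 * c / (c - 1)) *
        (δ / ‖1 - w‖) * ‖reprKernel ν γ w‖ := by
  set A := ‖1 - w‖
  set J := ∫ r, ‖(1 - (r : ℂ) * w)⁻¹‖ ∂ν
  set T := cauchyTransform ν
  have hA : 0 < A := by linarith [norm_sub_norm_le (1 : ℂ) w, norm_one (α := ℂ)]
  have hδ0 : 0 ≤ δ := (norm_nonneg _).trans hδ
  have hc1 : 0 < c - 1 := sub_pos.2 hc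
  have hA₀ : A * (c - 1) / c ≤ ‖1 - w₀‖ := by
    have := norm_sub_norm_le (1 - w) (w₀ - w)
    rw [sub_sub_sub_cancel_right] at this
    rw [div_le_iff₀ (by linarith)]
    nlinarith
  have hA₀pos : 0 < ‖1 - w₀‖ := lt_of_lt_of_le (by positivity) hA₀
  have hw1 : w ≠ 1 := fun h ↦ by simp [h] at hw
  have hw₀1 : w₀ ≠ 1 := fun h ↦ by simp [h] at hA₀pos
  have hJ : J ≤ √2 * ‖T w‖ := integral_norm_inv_le_sqrt_two_mul_norm_cauchyTransform hν hw
  have hΔT : ‖T w₀ - T w‖ ≤ 2 * c / (c - 1) * (δ / A) * J := by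
    refine (norm_cauchyTransform_sub_le hν hw.le hw1 hw₀ hw₀1).trans ?_
    gcongr
    calc 2 * ‖w₀ - w‖ / ‖1 - w₀‖ ≤ 2 * δ / (A * (c - 1) / c) := by gcongr
      _ = 2 * c / (c - 1) * (δ / A) := by field_simp
  have hT₀ : ‖T w₀‖ ≤ (c + 1) / (c - 1) * J := by
    have hTw : ‖T w‖ ≤ J := norm_integral_le_integral_norm _
    have hδA : δ / A ≤ 1 / c := by rw [div_le_div_iff₀ hA (by linarith)]; linarith
    have : 2 * c / (c - 1) * (δ / A) ≤ 2 / (c - 1) :=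
      calc 2 * c / (c - 1) * (δ / A) ≤ 2 * c / (c - 1) * (1 / c) := by gcongr
        _ = 2 / (c - 1) := by field_simp
    calc ‖T w₀‖ ≤ ‖T w‖ + ‖T w₀ - T w‖ := norm_le_norm_add_norm_sub' _ _
      _ ≤ J + 2 / (c - 1) * J := by gcongr; exact hΔT.trans (by gcongr)
      _ = (c + 1) / (c - 1) * J := by field_simp; ring
  have hΔp := norm_one_sub_cpow_neg_sub_le hγ hc hw hδ hcδ
  have hp : ‖(1 - w) ^ (-γ : ℂ)‖ = A ^ (-γ) := by
    rw [show (-γ : ℂ) = ((-γ : ℝ) : ℂ) by push_cast; rfl, Complex.norm_cpow_real]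
  set M := γ * (c / (c - 1)) ^ (γ + 1) * ((c + 1) / (c - 1)) + 2 * c / (c - 1)
  calc ‖reprKernel ν γ w₀ - reprKernel ν γ w‖
      = ‖((1 - w₀) ^ (-γ : ℂ) - (1 - w) ^ (-γ : ℂ)) * T w₀ +
          (1 - w) ^ (-γ : ℂ) * (T w₀ - T w)‖ := by
        rw [reprKernel, reprKernel]; congr 1; ring
    _ ≤ γ * (c / (c - 1)) ^ (γ + 1) * (δ / A) * A ^ (-γ) * ((c + 1) / (c - 1) * J) +
          A ^ (-γ) * (2 * c / (c - 1) * (δ / A) * J) := by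
        refine (norm_add_le _ _).trans ?_
        rw [norm_mul, norm_mul, hp]
        gcongr
    _ = M * (δ / A) * (A ^ (-γ) * J) := by ring
    _ ≤ M * (δ / A) * (A ^ (-γ) * (√2 * ‖T w‖)) := by gcongr
    _ = √2 * M * (δ / A) * ‖reprKernel ν γ w‖ := by rw [reprKernel, norm_mul, hp]; ring

lemma kernel_constant_le {γ c : ℝ} (hγ : 0 ≤ γ) (hc : 1 < c) :
    √2 * (γ * (c / (c - 1)) ^ (γ + 1) * ((c + 1) / (c - 1)) + 2 * c / (c - 1)) ≤
      √2 * (2 + γ) * c ^ (γ + 1) * (3 * c + 1) / (c - 1) ^ (γ + 2) := by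
  have hc1 : 0 < c - 1 := sub_pos.2 hc
  set K := (c / (c - 1)) ^ (γ + 1) with hK_def
  have hK : 1 ≤ K := Real.one_le_rpow ((one_le_div hc1).2 (by linarith)) (by linarith)
  have hrhs : √2 * (2 + γ) * c ^ (γ + 1) * (3 * c + 1) / (c - 1) ^ (γ + 2) =
      √2 * ((2 + γ) * K * (3 * c + 1) / (c - 1)) := by
    rw [hK_def, Real.div_rpow (by linarith) hc1.le, show γ + 2 = γ + 1 + 1 by ring,
      Real.rpow_add_one hc1.ne']
    field_simp
  have hnum : γ * K * (c + 1) + 2 * c ≤ (2 + γ) * K * (3 * c + 1) := by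
    nlinarith [mul_le_mul_of_nonneg_right hK (by linarith : (0 : ℝ) ≤ 3 * c + 1),
      mul_nonneg (mul_nonneg hγ (by linarith : (0 : ℝ) ≤ K)) hc1.le]
  rw [hrhs]
  gcongr √2 * ?_
  calc γ * K * ((c + 1) / (c - 1)) + 2 * c / (c - 1) = (γ * K * (c + 1) + 2 * c) / (c - 1) := by
        ring
    _ ≤ (2 + γ) * K * (3 * c + 1) / (c - 1) := by gcongr

/-- Lemma 3.5: pointwise derivative-type estimate
`|B_{z₀}(ζ) - B_z(ζ)| ≤ C (|z-z₀|/|1-conj ζ z|) |B_z(ζ)|` with the explicit constant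
`C = √2 (2+γ) c^{γ+1}(3c+1)/(c-1)^{γ+2}`, valid whenever `|1-conj ζ z| ≥ c|z-z₀|`. -/
theorem kernel_difference_pointwise_estimate
    (γ : ℝ) (hγ : 1 ≤ γ) (ν : Measure ℝ) [IsFiniteMeasure ν]
    (hsupp : ν (Set.Icc (0 : ℝ) 1)ᶜ = 0) (c : ℝ) (hc : 1 < c)
    (B : ℂ → ℂ → ℂ)
    (hB : ∀ z ζ : ℂ, B z ζ =
      (1 - (starRingEnd ℂ) z * ζ) ^ (-(γ : ℂ)) *
        ∫ r : ℝ, (1 - (r : ℂ) * ((starRingEnd ℂ) z * ζ))⁻¹ ∂ν) :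
    ∀ z ∈ unitDisc, ∀ z₀ ∈ unitDisc, ∀ ζ ∈ unitDisc,
      c * dist z z₀ ≤ ‖1 - (starRingEnd ℂ) ζ * z‖ →
      ‖B z₀ ζ - B z ζ‖ ≤
        (Real.sqrt 2 * (2 + γ) * c ^ (γ + 1) * (3 * c + 1) / (c - 1) ^ (γ + 2)) *
          (dist z z₀ / ‖1 - (starRingEnd ℂ) ζ * z‖) *
          ‖B z ζ‖ := by
  intro z hz z₀ hz₀ ζ hζ hdist
  simp only [unitDisc, mem_ball_zero_iff] at hz hz₀ hζ
  have hw : ∀ x : ℂ, ‖x‖ < 1 → ‖conj x * ζ‖ < 1 := fun x hx ↦ by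
    rw [norm_mul, Complex.norm_conj]; nlinarith [norm_nonneg x, norm_nonneg ζ]
  have hA : ‖1 - conj ζ * z‖ = ‖1 - conj z * ζ‖ := by
    rw [← Complex.norm_conj]; simp [mul_comm]
  have hδ : ‖conj z₀ * ζ - conj z * ζ‖ ≤ dist z z₀ := by
    rw [← sub_mul, ← map_sub, norm_mul, Complex.norm_conj, dist_comm, dist_eq_norm]
    nlinarith [norm_nonneg (z₀ - z)]
  have hBk : ∀ x, B x ζ = reprKernel ν γ (conj x * ζ) := fun x ↦ hB x ζ
  rw [hBk, hBk, hA]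
  rw [hA] at hdist
  refine (norm_reprKernel_sub_le (mem_ae_iff.2 hsupp) (by linarith) hc (hw z hz)
    (hw z₀ hz₀).le hδ hdist).trans ?_
  gcongr
  exact kernel_constant_le (by linarith) hc

end
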